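/- Let k ≥ 2 be an integer, γ₁,…,γ_k positive real numbers, and α₁ > α₂ > ⋯ > α_k real numbers. Let ℓ ≥ 3 be an integer, t₁ < ⋯ < t_ℓ distinct real numbers, and (u_n) a sequence of positive reals with u_n → +∞. Then there exist a constant C > 0 and an integer N₀ such that for all n ≥ N₀: inf over (α,β) ∈ ℝ² of ∑_{i=1}^ℓ |f_{α,β}(log(u_n) + t_i)|² ≥ C · u_n^{2(α₂−α₁)}. -/

import Mathlib

open Filter Topology

/-- The function `f_{α,β}(x) = α·x + β − log(∑ γ_q exp(α_q x))`. -/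
noncomputable def f {k : ℕ} (γ αs : Fin k → ℝ) (a b : ℝ) (x : ℝ) : ℝ :=
  a * x + b - Real.log (∑ q, γ q * Real.exp (αs q * x))

/-- The lower-order tail. -/
noncomputable def Hf {k : ℕ} (hk : 2 ≤ k) (γ αs : Fin k → ℝ) (x : ℝ) : ℝ :=
  ∑ q ∈ Finset.univ.erase (⟨0, by omega⟩ : Fin k),
    (γ q / γ ⟨0, by omega⟩) * Real.exp ((αs q - αs ⟨0, by omega⟩) * x)

private lemma Hf_pos {k : ℕ} (hk : 2 ≤ k) (γ αs : Fin k → ℝ) (hγ : ∀ q, 0 < γ q) (x : ℝ) :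
    0 < Hf hk γ αs x := by
  apply Finset.sum_pos
  · intro q _
    have := hγ q
    have := hγ (⟨0, by omega⟩ : Fin k)
    positivity
  · exact ⟨⟨1, by omega⟩, by simp [Finset.mem_erase, Fin.ext_iff]⟩

private lemma logS_eq {k : ℕ} (hk : 2 ≤ k) (γ αs : Fin k → ℝ) (hγ : ∀ q, 0 < γ q) (x : ℝ) :
    Real.log (∑ q, γ q * Real.exp (αs q * x))
      = αs ⟨0, by omega⟩ * x + Real.log (γ ⟨0, by omega⟩) + Real.log (1 + Hf hk γ αs x) := by
  set i0 : Fin k := ⟨0, by omega⟩ with hi0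
  have hHpos : 0 < Hf hk γ αs x := Hf_pos hk γ αs hγ x
  have hprod : ∑ q, γ q * Real.exp (αs q * x)
      = γ i0 * Real.exp (αs i0 * x) * (1 + Hf hk γ αs x) := by
    rw [mul_add, mul_one, Hf, Finset.mul_sum,
      ← Finset.add_sum_erase _ _ (Finset.mem_univ i0)]
    congr 1
    apply Finset.sum_congr rfl
    intro q _
    rw [show αs q * x = αs i0 * x + (αs q - αs i0) * x by ring, Real.exp_add]
    have := (hγ i0).ne'
    rw [← hi0]
    field_simp
  have h1 : γ i0 * Real.exp (αs i0 * x) ≠ 0 := by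
    have := hγ i0; positivity
  have h2 : (1 : ℝ) + Hf hk γ αs x ≠ 0 := by linarith
  rw [hprod, Real.log_mul h1 h2, Real.log_mul (hγ i0).ne' (Real.exp_ne_zero _), Real.log_exp]
  ring

private lemma exp_neg_mul_tendsto {c : ℝ} (hc : c < 0) :
    Tendsto (fun x : ℝ => Real.exp (c * x)) atTop (𝓝 0) := by
  have h1 : Tendsto (fun x : ℝ => (-c) * x) atTop atTop :=
    Tendsto.const_mul_atTop (by linarith) tendsto_id
  have := Real.tendsto_exp_neg_atTop_nhds_zero.comp h1
  refine this.congr fun x => ?_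
  simp [Function.comp, neg_mul]

private lemma Hf_ratio {k : ℕ} (hk : 2 ≤ k) (γ αs : Fin k → ℝ)
    (hγ : ∀ q, 0 < γ q) (hαs : StrictAnti αs) :
    Tendsto (fun x => Hf hk γ αs x / Real.exp ((αs ⟨1, by omega⟩ - αs ⟨0, by omega⟩) * x))
      atTop (𝓝 (γ ⟨1, by omega⟩ / γ ⟨0, by omega⟩)) := by
  set i0 : Fin k := ⟨0, by omega⟩ with hi0
  set i1 : Fin k := ⟨1, by omega⟩ with hi1
  have heq : ∀ x, Hf hk γ αs x / Real.exp ((αs i1 - αs i0) * x)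
      = ∑ q ∈ Finset.univ.erase i0, (γ q / γ i0) * Real.exp ((αs q - αs i1) * x) := by
    intro x
    rw [Hf, Finset.sum_div]
    apply Finset.sum_congr rfl
    intro q _
    rw [mul_div_assoc, ← Real.exp_sub]
    congr 2
    ring
  have hlim : Tendsto
      (fun x => ∑ q ∈ Finset.univ.erase i0, (γ q / γ i0) * Real.exp ((αs q - αs i1) * x))
      atTop (𝓝 (∑ q ∈ Finset.univ.erase i0, if q = i1 then γ i1 / γ i0 else 0)) := by
    apply tendsto_finset_sum
    intro q hq
    by_cases h : q = i1
    · subst h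
      simp only [if_pos rfl, sub_self, zero_mul, Real.exp_zero, mul_one]
      exact tendsto_const_nhds
    · rw [if_neg h]
      have hq0 : q ≠ i0 := (Finset.mem_erase.mp hq).1
      have hlt : i1 < q := by
        have h0 : q.val ≠ 0 := fun hv => hq0 (Fin.ext hv)
        have h1' : q.val ≠ 1 := fun hv => h (Fin.ext hv)
        exact Fin.mk_lt_of_lt_val (by omega)
      have hneg : αs q - αs i1 < 0 := sub_neg.mpr (hαs hlt)
      have := (exp_neg_mul_tendsto hneg).const_mul (γ q / γ i0)
      simpa using this
  have hval : (∑ q ∈ Finset.univ.erase i0, if q = i1 then γ i1 / γ i0 else 0)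
      = γ i1 / γ i0 := by
    rw [Finset.sum_ite_eq']
    simp [Fin.ext_iff]
  rw [hval] at hlim
  exact hlim.congr fun x => (heq x).symm

private lemma Hf_tendsto {k : ℕ} (hk : 2 ≤ k) (γ αs : Fin k → ℝ)
    (hγ : ∀ q, 0 < γ q) (hαs : StrictAnti αs) :
    Tendsto (Hf hk γ αs) atTop (𝓝[>] (0 : ℝ)) := by
  rw [tendsto_nhdsWithin_iff]
  constructor
  · have hc : αs ⟨1, by omega⟩ - αs ⟨0, by omega⟩ < 0 :=
      sub_neg.mpr (hαs (Fin.mk_lt_mk.mpr (by omega)))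
    have h := (Hf_ratio hk γ αs hγ hαs).mul (exp_neg_mul_tendsto hc)
    rw [mul_zero] at h
    refine h.congr fun x => ?_
    exact div_mul_cancel₀ _ (Real.exp_ne_zero _)
  · exact Eventually.of_forall fun x => Hf_pos hk γ αs hγ x

private lemma log_ratio : Tendsto (fun y : ℝ => Real.log (1 + y) / y) (𝓝[>] (0:ℝ)) (𝓝 1) := by
  have hd : HasDerivAt (fun y : ℝ => Real.log (1 + y)) 1 0 := by
    have h1 : HasDerivAt (fun y : ℝ => 1 + y) 1 0 := by
      simpa using (hasDerivAt_id (0 : ℝ)).const_add 1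
    have := (Real.hasDerivAt_log (by norm_num : (1 : ℝ) + 0 ≠ 0)).comp 0 h1
    exact this.congr_deriv (by norm_num)
  have hs := hasDerivAt_iff_tendsto_slope.mp hd
  have hmono : 𝓝[>] (0:ℝ) ≤ 𝓝[≠] (0:ℝ) :=
    nhdsWithin_mono _ fun x hx => ne_of_gt hx
  refine (hs.mono_left hmono).congr fun y => ?_
  simp [slope_def_field, div_eq_mul_inv, mul_comm]

private lemma logH_ratio {k : ℕ} (hk : 2 ≤ k) (γ αs : Fin k → ℝ)
    (hγ : ∀ q, 0 < γ q) (hαs : StrictAnti αs) :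
    Tendsto
      (fun x => Real.log (1 + Hf hk γ αs x)
        / Real.exp ((αs ⟨1, by omega⟩ - αs ⟨0, by omega⟩) * x))
      atTop (𝓝 (γ ⟨1, by omega⟩ / γ ⟨0, by omega⟩)) := by
  have h1 := log_ratio.comp (Hf_tendsto hk γ αs hγ hαs)
  have h2 := h1.mul (Hf_ratio hk γ αs hγ hαs)
  rw [one_mul] at h2
  refine h2.congr fun x => ?_
  have hne : Hf hk γ αs x ≠ 0 := (Hf_pos hk γ αs hγ x).ne'
  have hE : Real.exp ((αs ⟨1, by omega⟩ - αs ⟨0, by omega⟩) * x) ≠ 0 := Real.exp_ne_zero _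
  simp only [Function.comp_apply]
  field_simp

set_option maxHeartbeats 1000000 in
theorem stmt_8 {k : ℕ} (hk : 2 ≤ k) (γ αs : Fin k → ℝ)
    (hγ : ∀ q, 0 < γ q) (hαs : StrictAnti αs)
    {ℓ : ℕ} (hℓ : 3 ≤ ℓ) (t : Fin ℓ → ℝ) (ht : StrictMono t)
    (u : ℕ → ℝ) (hu_pos : ∀ n, 0 < u n) (hu : Tendsto u atTop atTop) :
    ∃ C : ℝ, 0 < C ∧ ∃ N₀ : ℕ, ∀ n, N₀ ≤ n → ∀ a b : ℝ,
      C * u n ^ (2 * (αs ⟨1, by omega⟩ - αs ⟨0, by omega⟩))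
        ≤ ∑ i, (f γ αs a b (Real.log (u n) + t i)) ^ 2 := by
  set i0k : Fin k := ⟨0, by omega⟩ with hi0k
  set i1k : Fin k := ⟨1, by omega⟩ with hi1k
  set c : ℝ := αs i1k - αs i0k with hc_def
  have hc : c < 0 := sub_neg.mpr (hαs (Fin.mk_lt_mk.mpr (by omega)))
  set j0 : Fin ℓ := ⟨0, by omega⟩ with hj0
  set j1 : Fin ℓ := ⟨1, by omega⟩ with hj1
  set j2 : Fin ℓ := ⟨2, by omega⟩ with hj2
  have hne01 : j0 ≠ j1 := by simp [hj0, hj1, Fin.ext_iff]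
  have hne02 : j0 ≠ j2 := by simp [hj0, hj2, Fin.ext_iff]
  have hne12 : j1 ≠ j2 := by simp [hj1, hj2, Fin.ext_iff]
  have hT01 : t j0 < t j1 := ht (Fin.mk_lt_mk.mpr (by omega))
  have hT12 : t j1 < t j2 := ht (Fin.mk_lt_mk.mpr (by omega))
  set lam : Fin ℓ → ℝ := fun i =>
    if i = j0 then t j1 - t j2 else if i = j1 then t j2 - t j0
    else if i = j2 then t j0 - t j1 else 0 with hlam
  have hsum : ∀ w : Fin ℓ → ℝ, ∑ i, lam i * w i
      = (t j1 - t j2) * w j0 + (t j2 - t j0) * w j1 + (t j0 - t j1) * w j2 := by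
    intro w
    have hz : ∀ x ∈ Finset.univ, x ∉ ({j0, j1, j2} : Finset (Fin ℓ)) → lam x * w x = 0 := by
      intro x _ hx
      simp only [Finset.mem_insert, Finset.mem_singleton, not_or] at hx
      simp [hlam, hx.1, hx.2.1, hx.2.2]
    rw [← Finset.sum_subset (Finset.subset_univ ({j0, j1, j2} : Finset (Fin ℓ))) hz]
    rw [Finset.sum_insert (by simp [hne01, hne02]),
      Finset.sum_insert (by simp [hne12]), Finset.sum_singleton]
    simp [hlam, hne01, hne02, hne12, hne01.symm, hne02.symm, hne12.symm]
    ring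
  set S : ℝ := ∑ i, lam i ^ 2 with hS_def
  have hlamj2 : lam j2 = t j0 - t j1 := by
    simp [hlam, hne02.symm, hne12.symm]
  have hSpos : 0 < S := by
    have h1 : 0 < lam j2 ^ 2 := by
      rw [hlamj2]
      have hne : t j0 - t j1 ≠ 0 := by intro h; nlinarith
      positivity
    have h2 := Finset.single_le_sum (f := fun i => lam i ^ 2)
      (fun i _ => sq_nonneg (lam i)) (Finset.mem_univ j2)
    rw [hS_def]
    exact h1.trans_le h2
  set R : ℝ := γ i1k / γ i0k with hR_def
  have hRpos : 0 < R := div_pos (hγ i1k) (hγ i0k)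
  set Q : ℝ := (t j1 - t j2) * Real.exp (c * t j0) + (t j2 - t j0) * Real.exp (c * t j1)
    + (t j0 - t j1) * Real.exp (c * t j2) with hQ_def
  have hQneg : Q < 0 := by
    have hd02 : 0 < t j2 - t j0 := by linarith
    have ha : 0 < (t j2 - t j1) / (t j2 - t j0) := by
      apply div_pos <;> linarith
    have hb : 0 < (t j1 - t j0) / (t j2 - t j0) := by
      apply div_pos <;> linarith
    have hab : (t j2 - t j1) / (t j2 - t j0) + (t j1 - t j0) / (t j2 - t j0) = 1 := by
      field_simp
      ring
    have hxy : c * t j0 ≠ c * t j2 := by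
      intro h
      have h' : c * (t j2 - t j0) = 0 := by linarith
      rcases mul_eq_zero.mp h' with h'' | h'' <;> [linarith; linarith]
    have hconv := strictConvexOn_exp.2 (Set.mem_univ (c * t j0)) (Set.mem_univ (c * t j2))
      hxy ha hb hab
    simp only [smul_eq_mul] at hconv
    have hmid : (t j2 - t j1) / (t j2 - t j0) * (c * t j0)
        + (t j1 - t j0) / (t j2 - t j0) * (c * t j2) = c * t j1 := by
      field_simp
      ring
    rw [hmid] at hconv
    have hmul := (mul_lt_mul_iff_right₀ hd02).mpr hconv
    rw [mul_add] at hmul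
    have e0 : (t j2 - t j0) * ((t j2 - t j1) / (t j2 - t j0) * Real.exp (c * t j0))
        = (t j2 - t j1) * Real.exp (c * t j0) := by field_simp
    have e2 : (t j2 - t j0) * ((t j1 - t j0) / (t j2 - t j0) * Real.exp (c * t j2))
        = (t j1 - t j0) * Real.exp (c * t j2) := by field_simp
    rw [e0, e2] at hmul
    have hQeq : Q = -((t j2 - t j1) * Real.exp (c * t j0)
        + (t j1 - t j0) * Real.exp (c * t j2)) + (t j2 - t j0) * Real.exp (c * t j1) := by
      rw [hQ_def]; ring
    linarith [hmul, hQeq.ge, hQeq.le]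
  set M : ℝ := -R * Q with hM_def
  have hMpos : 0 < M := by
    have h := mul_pos hRpos (neg_pos.mpr hQneg)
    have hMeq : M = R * -Q := by rw [hM_def]; ring
    linarith [hMeq.le, hMeq.ge]
  set Φ : ℝ → ℝ := fun L => -∑ i, lam i * Real.log (1 + Hf hk γ αs (L + t i)) with hΦ_def
  have hΦsum : ∀ L, Φ L = -((t j1 - t j2) * Real.log (1 + Hf hk γ αs (L + t j0))
      + (t j2 - t j0) * Real.log (1 + Hf hk γ αs (L + t j1))
      + (t j0 - t j1) * Real.log (1 + Hf hk γ αs (L + t j2))) := by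
    intro L
    simp only [hΦ_def]
    rw [hsum (fun i => Real.log (1 + Hf hk γ αs (L + t i)))]
  have hDj : ∀ T : ℝ, Tendsto
      (fun L => Real.log (1 + Hf hk γ αs (L + T)) / Real.exp (c * (L + T))) atTop (𝓝 R) := by
    intro T
    have hshift : Tendsto (fun L : ℝ => L + T) atTop atTop :=
      tendsto_atTop_add_const_right _ T tendsto_id
    exact (logH_ratio hk γ αs hγ hαs).comp hshift
  have hΦlim : Tendsto (fun L => Φ L / Real.exp (c * L)) atTop (𝓝 M) := by
    have h0 := (hDj (t j0)).const_mul ((t j1 - t j2) * Real.exp (c * t j0))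
    have h1 := (hDj (t j1)).const_mul ((t j2 - t j0) * Real.exp (c * t j1))
    have h2 := (hDj (t j2)).const_mul ((t j0 - t j1) * Real.exp (c * t j2))
    have hcomb := ((h0.add h1).add h2).neg
    have hMval : -((t j1 - t j2) * Real.exp (c * t j0) * R
        + ((t j2 - t j0) * Real.exp (c * t j1) * R
        + (t j0 - t j1) * Real.exp (c * t j2) * R)) = M := by
      rw [hM_def, hQ_def]; ring
    rw [show (t j1 - t j2) * Real.exp (c * t j0) * R
        + ((t j2 - t j0) * Real.exp (c * t j1) * R
        + (t j0 - t j1) * Real.exp (c * t j2) * R)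
        = (t j1 - t j2) * Real.exp (c * t j0) * R
        + (t j2 - t j0) * Real.exp (c * t j1) * R
        + (t j0 - t j1) * Real.exp (c * t j2) * R by ring] at hMval
    rw [show ((t j1 - t j2) * Real.exp (c * t j0) * R
        + (t j2 - t j0) * Real.exp (c * t j1) * R
        + (t j0 - t j1) * Real.exp (c * t j2) * R) = -M by linarith [hMval]] at hcomb
    rw [neg_neg] at hcomb
    refine hcomb.congr fun L => ?_
    have hexp : ∀ T : ℝ, Real.exp (c * (L + T)) = Real.exp (c * L) * Real.exp (c * T) := by
      intro T; rw [← Real.exp_add]; ring_nf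
    rw [hΦsum L, hexp (t j0), hexp (t j1), hexp (t j2)]
    have hEL : Real.exp (c * L) ≠ 0 := Real.exp_ne_zero _
    have hE0 : Real.exp (c * t j0) ≠ 0 := Real.exp_ne_zero _
    have hE1 : Real.exp (c * t j1) ≠ 0 := Real.exp_ne_zero _
    have hE2 : Real.exp (c * t j2) ≠ 0 := Real.exp_ne_zero _
    field_simp
  have hev : ∀ᶠ L in atTop, M / 2 ≤ Φ L / Real.exp (c * L) :=
    hΦlim.eventually (eventually_ge_nhds (by linarith))
  have hlog : Tendsto (fun n => Real.log (u n)) atTop atTop :=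
    Real.tendsto_log_atTop.comp hu
  have hevn : ∀ᶠ n in atTop, M / 2 ≤ Φ (Real.log (u n))
      / Real.exp (c * Real.log (u n)) := hlog.eventually hev
  obtain ⟨N₀, hN₀⟩ := eventually_atTop.mp hevn
  refine ⟨(M / 2) ^ 2 / S, div_pos (pow_pos (by linarith) 2) hSpos, N₀, ?_⟩
  intro n hn a b
  set L : ℝ := Real.log (u n) with hL_def
  set E : ℝ := Real.exp (c * L) with hE_def
  have hEpos : 0 < E := Real.exp_pos _
  have hΦge : M / 2 * E ≤ Φ L := by
    have h := hN₀ n hn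
    calc M / 2 * E ≤ Φ L / E * E := mul_le_mul_of_nonneg_right h hEpos.le
      _ = Φ L := div_mul_cancel₀ _ hEpos.ne'
  have hΦnn : 0 ≤ M / 2 * E := mul_nonneg (by linarith) hEpos.le
  have hfi : ∀ i : Fin ℓ, f γ αs a b (L + t i)
      = (a - αs i0k) * (L + t i) + (b - Real.log (γ i0k))
        - Real.log (1 + Hf hk γ αs (L + t i)) := by
    intro i
    simp only [f]
    rw [logS_eq hk γ αs hγ (L + t i)]
    ring
  have hkey : ∑ i, lam i * f γ αs a b (L + t i) = Φ L := by
    rw [hsum (fun i => f γ αs a b (L + t i)), hΦsum L, hfi j0, hfi j1, hfi j2]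
    ring
  have hCS : (∑ i, lam i * f γ αs a b (L + t i)) ^ 2
      ≤ S * ∑ i, (f γ αs a b (L + t i)) ^ 2 := by
    rw [hS_def]
    exact Finset.sum_mul_sq_le_sq_mul_sq Finset.univ lam (fun i => f γ αs a b (L + t i))
  rw [hkey] at hCS
  have hrpow : u n ^ (2 * c) = E ^ 2 := by
    rw [Real.rpow_def_of_pos (hu_pos n), hE_def, sq, ← Real.exp_add]
    congr 1
    rw [← hL_def]
    ring
  calc (M / 2) ^ 2 / S * u n ^ (2 * c)
      = (M / 2 * E) ^ 2 / S := by rw [hrpow]; ring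
    _ ≤ Φ L ^ 2 / S := by
        have hp := pow_le_pow_left₀ hΦnn hΦge 2
        exact (div_le_div_iff_of_pos_right hSpos).mpr hp
    _ ≤ ∑ i, (f γ αs a b (L + t i)) ^ 2 := by
        rw [div_le_iff₀ hSpos]
        linarith [hCS]
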